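/- For every real A and every B ≥ 0, one has Φ(A - B) ≤ exp(2AB) · Φ(A + B). Equivalently, Φ(A + B) - exp(-2AB) · Φ(A - B) ≥ 0, which expresses the nonnegativity of the paper's Brownian boundary-crossing survival probability (take A = √(tτ)(q - c) and B = (μ - c)/(σ²√(tτ)) with μ ≥ c, so that 2AB = (2/σ²)(μ - c)(q - c)). -/
import Mathlib


open Real MeasureTheory Filter Topology

/-- Standard normal density φ(x) = exp(-x²/2)/√(2π). -/
noncomputable def stdPdf (x : ℝ) : ℝ := Real.exp (-(x ^ 2) / 2) / Real.sqrt (2 * Real.pi)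

/-- Standard normal CDF Φ(x) = ∫_{-∞}^x φ(u) du. -/
noncomputable def stdCdf (x : ℝ) : ℝ := ∫ u in Set.Iio x, stdPdf u

/-- P(μ, σ, c): probability that an agent with prior N(μ, σ²) and link cost c
is never ostracized (Proposition 1). -/
noncomputable def Pstay (μ σ c : ℝ) : ℝ :=
  ∫ q in Set.Ioi c, (1 - Real.exp (-(2 / σ ^ 2) * (μ - c) * (q - c))) * stdPdf ((q - μ) / σ) / σ

lemma stdPdf_nonneg (x : ℝ) : 0 ≤ stdPdf x := by
  unfold stdPdf; positivity

lemma stdPdf_integrable : Integrable stdPdf := by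
  have h : Integrable (fun x : ℝ => Real.exp (-(1/2 : ℝ) * x ^ 2)) :=
    integrable_exp_neg_mul_sq (by norm_num)
  have : stdPdf = fun x => Real.exp (-(1/2 : ℝ) * x ^ 2) * (1 / Real.sqrt (2 * Real.pi)) := by
    funext x; unfold stdPdf; ring_nf
  rw [this]
  exact h.mul_const _

/-- for all A ∈ ℝ and B ≥ 0, Φ(A - B) ≤ exp(2AB)·Φ(A + B); equivalently
Φ(A + B) - exp(-2AB)·Φ(A - B) ≥ 0. -/
theorem stmt_14 (A B : ℝ) (hB : 0 ≤ B) :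
    stdCdf (A - B) ≤ Real.exp (2 * A * B) * stdCdf (A + B) ∧
    0 ≤ stdCdf (A + B) - Real.exp (-(2 * A * B)) * stdCdf (A - B) := by
  have key : stdCdf (A - B) ≤ Real.exp (2 * A * B) * stdCdf (A + B) := by
    have hmp : MeasurePreserving (fun x : ℝ => x + 2 * B) volume volume :=
      measurePreserving_add_right volume (2 * B)
    have hemb : MeasurableEmbedding (fun x : ℝ => x + 2 * B) :=
      (measurableEmbedding_addRight (2 * B))
    have hpre : (fun x : ℝ => x + 2 * B) ⁻¹' Set.Iio (A + B) = Set.Iio (A - B) := by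
      ext x; simp [Set.mem_Iio]; constructor <;> intro h <;> linarith
    have htrans : (∫ x in Set.Iio (A - B), stdPdf (x + 2 * B)) = stdCdf (A + B) := by
      rw [← hpre]
      exact hmp.setIntegral_preimage_emb hemb stdPdf (Set.Iio (A + B))
    have hmul : Real.exp (2 * A * B) * stdCdf (A + B)
        = ∫ x in Set.Iio (A - B), Real.exp (2 * A * B) * stdPdf (x + 2 * B) := by
      rw [← htrans, ← integral_const_mul]
    rw [hmul]
    apply setIntegral_mono_on
    · exact stdPdf_integrable.integrableOn
    · exact (((hmp.integrable_comp_emb hemb).mpr stdPdf_integrable).integrableOn).const_mul _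
    · exact measurableSet_Iio
    · intro x hx
      simp only [Set.mem_Iio] at hx
      unfold stdPdf
      rw [mul_div_assoc']
      apply div_le_div_of_nonneg_right ?_ (Real.sqrt_nonneg _)
      rw [← Real.exp_add]
      apply Real.exp_le_exp.mpr
      nlinarith [mul_nonneg hB (sub_nonneg.mpr hx.le), sq_nonneg B]
  refine ⟨key, ?_⟩
  have h := mul_le_mul_of_nonneg_left key (Real.exp_pos (-(2 * A * B))).le
  rw [← mul_assoc, ← Real.exp_add] at h
  simp at h
  linarith
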